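/- arXiv:2102.06409 — 2 statements merged into one kernel-verified Lean document; each statement's English description precedes it below -/
import Mathlib

section
/- Let M be a monoid, a ∈ M with a left inverse a' (a'a = 1), and e an idempotent of M with x R* e for some x ∈ M. Then a x R* a e a', where R* is the standard relation. In particular, if M is left abundant and x R* e with e idempotent, then ax is R*-related to the idempotent aea'. -/
/-! `a x R* a e` because `R*` is a left congruence, and `a e R* a e a'` because `a'` is
`R*`-related to `1` (it has the right inverse `a`), again multiplied on the left by `a e`. -/

def RStar {M : Type*} [Mul M] (x y : M) : Prop :=
  ∀ u v : M, u * x = v * x ↔ u * y = v * y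

namespace RStar

variable {M : Type*}

theorem symm [Mul M] {x y : M} (h : RStar x y) : RStar y x :=
  fun u v ↦ (h u v).symm

theorem trans [Mul M] {x y z : M} (hxy : RStar x y) (hyz : RStar y z) : RStar x z :=
  fun u v ↦ (hxy u v).trans (hyz u v)

theorem mul_left [Semigroup M] {x y : M} (h : RStar x y) (a : M) : RStar (a * x) (a * y) := by
  intro u v
  simpa only [← mul_assoc] using h (u * a) (v * a)

theorem one_of_mul_eq_one [Monoid M] {a a' : M} (ha : a' * a = 1) : RStar a' 1 := by
  intro u v
  refine ⟨fun h ↦ ?_, fun h ↦ by rw [mul_one, mul_one] at h; rw [h]⟩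
  simpa only [mul_one, mul_assoc, ha] using congrArg (· * a) h

end RStar

theorem rstar_left_mult_and_conjugate_general (M : Type*) [Monoid M]
    (a a' x e : M) (ha : a' * a = 1)
    (hxe : ∀ u v : M, u * x = v * x ↔ u * e = v * e) :
    ∀ u v : M, u * (a * x) = v * (a * x) ↔
      u * (a * e * a') = v * (a * e * a') := by
  have hconj : RStar (a * e * a') (a * e) := by
    simpa only [mul_one] using (RStar.one_of_mul_eq_one ha).mul_left (a * e)
  exact (RStar.mul_left hxe a).trans hconj.symm

theorem rstar_left_mult_and_conjugate (M : Type*) [Monoid M]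
    (a a' x e : M) (ha : a' * a = 1) (he : e * e = e)
    (hxe : ∀ u v : M, u * x = v * x ↔ u * e = v * e) :
    ∀ u v : M, u * (a * x) = v * (a * x) ↔
      u * (a * e * a') = v * (a * e * a') :=
  rstar_left_mult_and_conjugate_general M a a' x e ha hxe
end

section
/- Let M be a monoid, u left invertible with left inverse u', and e idempotent with u e u' idempotent (which holds since u'u = 1). If a ∈ M satisfies a R̃ e and u is invertible (uu' = u'u = 1), then ua R̃ ueu'. -/
section Monoid

variable {M : Type*} [Monoid M]

theorem IsIdempotentElem.units_inv_mul_mul {f : M} (hf : IsIdempotentElem f) (U : Mˣ) :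
    IsIdempotentElem (↑U⁻¹ * f * U) := by
  calc ↑U⁻¹ * f * U * (↑U⁻¹ * f * U) = ↑U⁻¹ * (f * f) * U := by
        simp only [mul_assoc, Units.mul_inv_cancel_left]
    _ = ↑U⁻¹ * f * U := by rw [hf.eq]

theorem Units.mul_mul_coe_eq_iff (f x : M) (U : Mˣ) : f * (x * U) = x * U ↔ f * x = x := by
  rw [← mul_assoc, Units.mul_left_inj]

theorem Units.mul_coe_mul_eq_iff (f x : M) (U : Mˣ) :
    f * (U * x) = U * x ↔ ↑U⁻¹ * f * U * x = x := by
  rw [← Units.mul_right_inj U⁻¹, Units.inv_mul_cancel_left]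
  simp only [mul_assoc]

def RTilde (a b : M) : Prop :=
  ∀ f : M, IsIdempotentElem f → (f * a = a ↔ f * b = b)

theorem RTilde.units_mul {a b : M} (h : RTilde a b) (U : Mˣ) : RTilde (U * a) (U * b) :=
  fun f hf => by
    rw [Units.mul_coe_mul_eq_iff, Units.mul_coe_mul_eq_iff]
    exact h _ (hf.units_inv_mul_mul U)

theorem RTilde.mul_units {a b : M} (h : RTilde a b) (U : Mˣ) : RTilde a (b * U) :=
  fun f hf => by
    rw [Units.mul_mul_coe_eq_iff]
    exact h f hf

end Monoid

theorem rtilde_left_mult_by_unit_general (M : Type*) [Monoid M]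
    (u u' a e : M) (hu : u * u' = 1) (hu' : u' * u = 1)
    (hae : ∀ f : M, f * f = f → (f * a = a ↔ f * e = e)) :
    ∀ f : M, f * f = f →
      (f * (u * a) = u * a ↔ f * (u * e * u') = u * e * u') :=
  let U : Mˣ := ⟨u, u', hu, hu'⟩
  ((RTilde.units_mul hae U).mul_units U⁻¹ : RTilde (U * a) (U * e * ↑U⁻¹))

theorem rtilde_left_mult_by_unit (M : Type*) [Monoid M]
    (u u' a e : M) (hu : u * u' = 1) (hu' : u' * u = 1)
    (he : e * e = e)
    (hae : ∀ f : M, f * f = f → (f * a = a ↔ f * e = e)) :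
    ∀ f : M, f * f = f →
      (f * (u * a) = u * a ↔ f * (u * e * u') = u * e * u') :=
  rtilde_left_mult_by_unit_general M u u' a e hu hu' hae
end
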